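/- Let $E \subset \mathbb{F}_q^2$ with $q$ an odd prime power. Then $M^*(E) := \max_{j \ne 0} \sum_{m \in S_j} |\widehat{E}(m)|^2 \lesssim q^{-3} |E|^{3/2}$, where $S_j = \{m \in \mathbb{F}_q^2 : m_1^2 + m_2^2 = j\}$. -/

import Mathlib

open Finset

noncomputable section

/-- Normalized finite-field Fourier transform of (the indicator of) a finite set
`E ⊆ F^n`, with respect to the additive character `χ`:
`Ê(m) = q^{-n} ∑_{x ∈ E} χ(-x·m)`. -/
def ffFourier {F : Type*} [Field F] [Fintype F] (χ : AddChar F ℂ) {n : ℕ}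
    (E : Finset (Fin n → F)) (m : Fin n → F) : ℂ :=
  ((Fintype.card F : ℂ) ^ n)⁻¹ * ∑ x ∈ E, χ (-(∑ i, x i * m i))

/-!
With `W(m) = ∑_{x ∈ E} χ(-x·m)` and `T = ∑_{m ∈ S_j} |W(m)|²`, one has `T = ∑_{x ∈ E} g(x)` where
`g` is the extension of `conj W` from the circle, so by Cauchy–Schwarz
`T² ≤ |E| ∑_{x ∈ E} |g(x)|² = |E| ∑_{m, m' ∈ S_j} conj W(m) W(m') W(m - m')`.
The diagonal contributes `|E| T`. Off the diagonal, Cauchy–Schwarz bounds the sum by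
`T (∑_{m ≠ m'} |W(m - m')|²)^{1/2}`; two distinct circles of the same nonzero radius meet in at
most two points, so each `v ≠ 0` is a difference `m - m'` at most twice, and Plancherel bounds this
by `T (2 q² |E|)^{1/2}`. Hence `T ≤ |E|² + √2 q |E|^{3/2} ≤ 3 q |E|^{3/2}`, and `Ê = q⁻² W`.
-/

open Matrix ComplexConjugate

section FourierSum

variable {F : Type*} [Field F] {n : ℕ}

def fourierSum (χ : AddChar F ℂ) (E : Finset (Fin n → F)) (m : Fin n → F) : ℂ :=
  ∑ x ∈ E, χ (-(x ⬝ᵥ m))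

lemma ffFourier_eq_inv_mul_fourierSum [Fintype F] (χ : AddChar F ℂ) (E : Finset (Fin n → F))
    (m : Fin n → F) :
    ffFourier χ E m = ((Fintype.card F : ℂ) ^ n)⁻¹ * fourierSum χ E m :=
  rfl

@[simp]
lemma fourierSum_zero (χ : AddChar F ℂ) (E : Finset (Fin n → F)) :
    fourierSum χ E 0 = #E := by
  simp [fourierSum]

lemma sum_apply_dotProduct [Fintype F] [DecidableEq F] {χ : AddChar F ℂ} (hχ : χ ≠ 1)
    (z : Fin n → F) :
    ∑ v, χ (z ⬝ᵥ v) = if z = 0 then (Fintype.card F : ℂ) ^ n else 0 := by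
  split_ifs with hz
  · simp [hz]
  · obtain ⟨i, hi⟩ := Function.ne_iff.mp hz
    obtain ⟨t, ht⟩ := AddChar.ne_one_iff.mp hχ
    let ψ : AddChar (Fin n → F) ℂ :=
      χ.compAddMonoidHom (AddMonoidHom.mk' (z ⬝ᵥ ·) (dotProduct_add z))
    have hψ : ψ ≠ 1 :=
      AddChar.ne_one_iff.mpr ⟨Pi.single i (t / z i), by simpa [ψ, mul_div_cancel₀ _ hi]⟩
    exact AddChar.sum_eq_zero_of_ne_one hψ

lemma sum_norm_sq_fourierSum [Fintype F] [DecidableEq F] {χ : AddChar F ℂ} (hχ : χ ≠ 1)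
    (E : Finset (Fin n → F)) :
    ∑ v, ‖fourierSum χ E v‖ ^ 2 = (Fintype.card F : ℝ) ^ n * #E := by
  have expand : ∀ v, (‖fourierSum χ E v‖ ^ 2 : ℂ) = ∑ x ∈ E, ∑ y ∈ E, χ ((y - x) ⬝ᵥ v) := by
    intro v
    rw [← Complex.mul_conj', fourierSum, map_sum, sum_mul_sum]
    refine sum_congr rfl fun x _ ↦ sum_congr rfl fun y _ ↦ ?_
    rw [← AddChar.map_neg_eq_conj, ← AddChar.map_add_eq_mul, sub_dotProduct]
    ring_nf
  apply Complex.ofReal_injective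
  push_cast
  calc ∑ v, (‖fourierSum χ E v‖ ^ 2 : ℂ) = ∑ x ∈ E, ∑ y ∈ E, ∑ v, χ ((y - x) ⬝ᵥ v) := by
        simp_rw [expand]
        rw [sum_comm]
        simp_rw [sum_comm (s := univ)]
    _ = ∑ x ∈ E, (Fintype.card F : ℂ) ^ n := by
        simp_rw [sum_apply_dotProduct hχ, sub_eq_zero, sum_ite_eq']
        exact sum_congr rfl fun x hx ↦ if_pos hx
    _ = (Fintype.card F : ℂ) ^ n * #E := by rw [sum_const, nsmul_eq_mul, mul_comm]

end FourierSum

section Extension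

variable {F : Type*} [Field F] {n : ℕ}

def extension (χ : AddChar F ℂ) (S : Finset (Fin n → F)) (f : (Fin n → F) → ℂ)
    (x : Fin n → F) : ℂ :=
  ∑ m ∈ S, χ (-(x ⬝ᵥ m)) * f m

variable (χ : AddChar F ℂ) (E S : Finset (Fin n → F)) (f : (Fin n → F) → ℂ)

lemma sum_extension :
    ∑ x ∈ E, extension χ S f x = ∑ m ∈ S, fourierSum χ E m * f m := by
  simp only [extension, fourierSum, sum_mul]
  exact sum_comm

lemma sum_norm_sq_extension [Finite F] :
    ∑ x ∈ E, (‖extension χ S f x‖ ^ 2 : ℂ) =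
      ∑ p ∈ S ×ˢ S, f p.1 * conj (f p.2) * fourierSum χ E (p.1 - p.2) := by
  have expand : ∀ x, (‖extension χ S f x‖ ^ 2 : ℂ) =
      ∑ p ∈ S ×ˢ S, f p.1 * conj (f p.2) * χ (-(x ⬝ᵥ (p.1 - p.2))) := by
    intro x
    rw [← Complex.mul_conj', extension, map_sum, sum_mul_sum, sum_product]
    refine sum_congr rfl fun m _ ↦ sum_congr rfl fun m' _ ↦ ?_
    rw [map_mul, ← AddChar.map_neg_eq_conj, neg_neg, dotProduct_sub, neg_sub,
      sub_eq_neg_add, AddChar.map_add_eq_mul]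
    ring
  simp_rw [expand, fourierSum, mul_sum]
  exact sum_comm

lemma sq_sum_norm_sq_fourierSum_le [Finite F] :
    (∑ m ∈ S, ‖fourierSum χ E m‖ ^ 2) ^ 2 ≤
      #E * ∑ p ∈ S ×ˢ S,
        ‖fourierSum χ E p.1‖ * ‖fourierSum χ E p.2‖ * ‖fourierSum χ E (p.1 - p.2)‖ := by
  set g := extension χ S (conj ∘ fourierSum χ E)
  have hT : ∑ m ∈ S, ‖fourierSum χ E m‖ ^ 2 = ‖∑ x ∈ E, g x‖ := by
    rw [sum_extension]
    simp_rw [Function.comp_apply, Complex.mul_conj']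
    norm_cast
    rw [Real.norm_of_nonneg (by positivity)]
  have hsq : ∑ x ∈ E, ‖g x‖ ^ 2 ≤ ∑ p ∈ S ×ˢ S,
      ‖fourierSum χ E p.1‖ * ‖fourierSum χ E p.2‖ * ‖fourierSum χ E (p.1 - p.2)‖ := by
    calc ∑ x ∈ E, ‖g x‖ ^ 2 = ‖∑ x ∈ E, (‖g x‖ ^ 2 : ℂ)‖ := by
          norm_cast
          rw [Real.norm_of_nonneg (by positivity)]
      _ ≤ _ := by
          rw [sum_norm_sq_extension]
          refine (norm_sum_le _ _).trans_eq (sum_congr rfl fun p _ ↦ ?_)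
          simp
  calc (∑ m ∈ S, ‖fourierSum χ E m‖ ^ 2) ^ 2 ≤ (∑ x ∈ E, ‖g x‖) ^ 2 := by
        rw [hT]
        gcongr
        exact norm_sum_le _ _
    _ ≤ #E * ∑ x ∈ E, ‖g x‖ ^ 2 := sq_sum_le_card_mul_sum_sq
    _ ≤ _ := by gcongr

end Extension

section Difference

variable {G : Type*} [AddCommGroup G] [DecidableEq G] {S : Finset G} {k : ℕ}

lemma card_filter_offDiag_sub_eq_le (hS : ∀ v ≠ 0, #{m ∈ S | m - v ∈ S} ≤ k) (v : G) :
    #{p ∈ S.offDiag | p.1 - p.2 = v} ≤ k := by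
  rcases eq_or_ne v 0 with rfl | hv
  · simp only [sub_eq_zero, filter_eq_empty_iff.mpr fun p hp ↦ (mem_offDiag.mp hp).2.2,
      card_empty, zero_le]
  refine (card_le_card_of_injOn Prod.fst ?_ ?_).trans (hS v hv)
  · intro p hp
    simp only [coe_filter, mem_offDiag, Set.mem_ofPred_eq] at hp ⊢
    obtain ⟨⟨hp₁, hp₂, -⟩, rfl⟩ := hp
    exact ⟨hp₁, by simpa using hp₂⟩
  · intro p hp p' hp' h
    simp only [coe_filter, Set.mem_ofPred_eq] at hp hp'
    have : p.2 = p'.2 := by rw [← sub_right_inj (a := p.1), hp.2, h, hp'.2]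
    exact Prod.ext h this

variable [Fintype G]

lemma sum_offDiag_apply_sub_le (hS : ∀ v ≠ 0, #{m ∈ S | m - v ∈ S} ≤ k) {g : G → ℝ}
    (hg : 0 ≤ g) : ∑ p ∈ S.offDiag, g (p.1 - p.2) ≤ k * ∑ v, g v := by
  rw [← sum_fiberwise_of_maps_to (g := fun p : G × G ↦ p.1 - p.2) (t := univ)
    (fun _ _ ↦ mem_univ _), mul_sum]
  refine sum_le_sum fun v _ ↦ ?_
  calc ∑ p ∈ S.offDiag with p.1 - p.2 = v, g (p.1 - p.2)
      = #{p ∈ S.offDiag | p.1 - p.2 = v} * g v := by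
        rw [sum_congr rfl fun p hp ↦ by rw [(mem_filter.mp hp).2], sum_const, nsmul_eq_mul]
    _ ≤ k * g v := by
        gcongr
        · exact hg v
        · exact card_filter_offDiag_sub_eq_le hS v

lemma sum_product_mul_mul_apply_sub_le (hS : ∀ v ≠ 0, #{m ∈ S | m - v ∈ S} ≤ k) (a : G → ℝ) :
    ∑ p ∈ S ×ˢ S, a p.1 * a p.2 * a (p.1 - p.2) ≤
      (∑ m ∈ S, a m ^ 2) * (a 0 + √(k * ∑ v, a v ^ 2)) := by
  set T := ∑ m ∈ S, a m ^ 2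
  have hT : ∑ p ∈ S ×ˢ S, (a p.1 * a p.2) ^ 2 = T ^ 2 := by
    simp_rw [sum_product, mul_pow, ← sum_mul_sum]
    exact (sq T).symm
  rw [← diag_union_offDiag, sum_union (disjoint_diag_offDiag _), sum_diag, mul_add]
  gcongr ?_ + ?_
  · simp [T, sq, sum_mul]
  · calc ∑ p ∈ S.offDiag, a p.1 * a p.2 * a (p.1 - p.2)
        ≤ √(∑ p ∈ S.offDiag, (a p.1 * a p.2) ^ 2) * √(∑ p ∈ S.offDiag, a (p.1 - p.2) ^ 2) :=
          Real.sum_mul_le_sqrt_mul_sqrt _ _ _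
      _ ≤ √(T ^ 2) * √(k * ∑ v, a v ^ 2) := by
          gcongr
          · rw [← hT, ← diag_union_offDiag]
            exact sum_le_sum_of_subset_of_nonneg subset_union_right fun _ _ _ ↦ sq_nonneg _
          · exact sum_offDiag_apply_sub_le hS fun v ↦ sq_nonneg (a v)
      _ = T * √(k * ∑ v, a v ^ 2) := by rw [Real.sqrt_sq (sum_nonneg fun _ _ ↦ sq_nonneg _)]

end Difference

section Circle

variable {F : Type*} [Field F] [Fintype F] [DecidableEq F]

def circle (j : F) : Finset (Fin 2 → F) :=
  {m | m 0 ^ 2 + m 1 ^ 2 = j}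

lemma card_filter_sub_mem_circle_le_two (h2 : (2 : F) ≠ 0) {j : F} (hj : j ≠ 0)
    {v : Fin 2 → F} (hv : v ≠ 0) : #{m ∈ circle j | m - v ∈ circle j} ≤ 2 := by
  set c := v 0 ^ 2 + v 1 ^ 2
  have hmem : ∀ m ∈ {m ∈ circle j | m - v ∈ circle j},
      m 0 ^ 2 + m 1 ^ 2 = j ∧ 2 * (m 0 * v 0 + m 1 * v 1) = c := by
    intro m hm
    simp only [circle, mem_filter, mem_univ, true_and, Pi.sub_apply] at hm
    exact ⟨hm.1, by linear_combination hm.1 - hm.2⟩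
  rcases eq_or_ne c 0 with hc | hc
  · -- for isotropic `v`, a point of the circle orthogonal to `v` would force `j * v i ^ 2 = 0`
    suffices {m ∈ circle j | m - v ∈ circle j} = ∅ by simp [this]
    refine eq_empty_of_forall_notMem fun m hm ↦ hv ?_
    obtain ⟨hm, hline⟩ := hmem m hm
    have hdot : m 0 * v 0 + m 1 * v 1 = 0 := (mul_eq_zero.mp (hline.trans hc)).resolve_left h2
    have hv0 : j * v 0 ^ 2 = 0 := by
      linear_combination (-(v 0 ^ 2)) * hm + (m 0 * v 0 - m 1 * v 1) * hdot + m 1 ^ 2 * hc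
    have hv1 : j * v 1 ^ 2 = 0 := by
      linear_combination (-(v 1 ^ 2)) * hm + (m 1 * v 1 - m 0 * v 0) * hdot + m 0 ^ 2 * hc
    ext i
    fin_cases i
    · simpa [hj] using hv0
    · simpa [hj] using hv1
  · -- `m` lies on the line `2 m ⬝ᵥ v = c`, on which it is determined by the cross product
    -- `m 1 * v 0 - m 0 * v 1`, whose square is `j c - c² / 4` by Lagrange's identity
    calc #{m ∈ circle j | m - v ∈ circle j}
        ≤ #(Polynomial.nthRootsFinset 2 (4 * j * c - c ^ 2)) := by
          refine card_le_card_of_injOn (fun m ↦ 2 * (m 1 * v 0 - m 0 * v 1)) ?_ ?_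
          · intro m hm
            obtain ⟨hm, hline⟩ := hmem m hm
            rw [mem_coe, Polynomial.mem_nthRootsFinset two_pos]
            linear_combination (4 * c) * hm - (2 * (m 0 * v 0 + m 1 * v 1) + c) * hline
          · intro m hm m' hm' h
            replace h : 2 * (m 1 * v 0 - m 0 * v 1) = 2 * (m' 1 * v 0 - m' 0 * v 1) := h
            have hline := (hmem m hm).2
            have hline' := (hmem m' hm').2
            have h0 : (2 * c) * m 0 = (2 * c) * m' 0 := by
              linear_combination v 0 * hline - v 0 * hline' - v 1 * h
            have h1 : (2 * c) * m 1 = (2 * c) * m' 1 := by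
              linear_combination v 1 * hline - v 1 * hline' + v 0 * h
            have h2c : 2 * c ≠ 0 := mul_ne_zero h2 hc
            ext i
            fin_cases i
            · exact mul_left_cancel₀ h2c h0
            · exact mul_left_cancel₀ h2c h1
      _ ≤ 2 := by
          rw [Polynomial.nthRootsFinset_def]
          exact (Multiset.toFinset_card_le _).trans (Polynomial.card_nthRoots 2 _)

end Circle

lemma sum_norm_sq_fourierSum_le {F : Type*} [Field F] [Fintype F] [DecidableEq F] {n : ℕ}
    {χ : AddChar F ℂ} (hχ : χ ≠ 1) (E S : Finset (Fin n → F)) {k : ℕ}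
    (hS : ∀ v ≠ 0, #{m ∈ S | m - v ∈ S} ≤ k) :
    ∑ m ∈ S, ‖fourierSum χ E m‖ ^ 2 ≤
      #E * (#E + √(k * ((Fintype.card F : ℝ) ^ n * #E))) := by
  have h := (sq_sum_norm_sq_fourierSum_le χ E S).trans <| mul_le_mul_of_nonneg_left
    (sum_product_mul_mul_apply_sub_le hS fun v ↦ ‖fourierSum χ E v‖) (Nat.cast_nonneg #E)
  rw [fourierSum_zero, Complex.norm_natCast, sum_norm_sq_fourierSum hχ] at h
  have hT : 0 ≤ ∑ m ∈ S, ‖fourierSum χ E m‖ ^ 2 := by positivity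
  have hB : 0 ≤ (#E : ℝ) * (#E + √(k * ((Fintype.card F : ℝ) ^ n * #E))) := by positivity
  nlinarith

lemma two_ne_zero_of_odd_card {F : Type*} [Field F] [Fintype F] (h : Odd (Fintype.card F)) :
    (2 : F) ≠ 0 :=
  Ring.two_ne_zero fun hF ↦ by
    have := FiniteField.even_card_iff_char_two.mp hF
    rw [Nat.odd_iff] at h
    omega

lemma mul_add_sqrt_le_three_mul_rpow {q e : ℝ} (hq : 0 ≤ q) (he : 0 ≤ e) (heq : e ≤ q ^ 2) :
    e * (e + √(2 * (q ^ 2 * e))) ≤ 3 * q * e ^ ((3 : ℝ) / 2) := by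
  obtain ⟨s, hs, rfl⟩ : ∃ s, 0 ≤ s ∧ e = s ^ 2 := ⟨√e, Real.sqrt_nonneg e, (Real.sq_sqrt he).symm⟩
  have hsq : s ≤ q := (sq_le_sq₀ hs hq).mp heq
  have hroot : √(2 * (q ^ 2 * s ^ 2)) ≤ 2 * q * s := by
    rw [← mul_pow, Real.sqrt_mul zero_le_two, Real.sqrt_sq (by positivity)]
    have : √2 ≤ 2 := Real.sqrt_le_iff.mpr (by norm_num)
    nlinarith [mul_nonneg hq hs]
  have hpow : (s ^ 2) ^ ((3 : ℝ) / 2) = s ^ 3 := by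
    rw [← Real.rpow_natCast, ← Real.rpow_mul hs]
    norm_num
  rw [hpow]
  nlinarith [mul_le_mul_of_nonneg_left hsq (pow_nonneg hs 3), pow_nonneg hs 2]

theorem stmt_16 :
    ∃ C : ℝ, 0 < C ∧ ∀ (F : Type) [Field F] [Fintype F] [DecidableEq F],
      Odd (Fintype.card F) →
      ∀ χ : AddChar F ℂ, χ ≠ 1 →
      ∀ (E : Finset (Fin 2 → F)) (j : F), j ≠ 0 →
        ∑ m ∈ Finset.univ.filter (fun m : Fin 2 → F => m 0 ^ 2 + m 1 ^ 2 = j),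
            ‖ffFourier χ E m‖ ^ 2 ≤
          C * (E.card : ℝ) ^ ((3 : ℝ) / 2) / (Fintype.card F : ℝ) ^ 3 := by
  refine ⟨3, by norm_num, fun F _ _ _ hodd χ hχ E j hj ↦ ?_⟩
  have hT := sum_norm_sq_fourierSum_le hχ E (circle j)
    fun _ hv ↦ card_filter_sub_mem_circle_le_two (two_ne_zero_of_odd_card hodd) hj hv
  have hE : (#E : ℝ) ≤ (Fintype.card F : ℝ) ^ 2 := by
    exact_mod_cast (card_le_univ E).trans_eq (by simp)
  have hq : (0 : ℝ) < Fintype.card F := by positivity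
  push_cast at hT
  calc ∑ m ∈ circle j, ‖ffFourier χ E m‖ ^ 2
      = (∑ m ∈ circle j, ‖fourierSum χ E m‖ ^ 2) / (Fintype.card F : ℝ) ^ 4 := by
        rw [div_eq_inv_mul, mul_sum]
        simp [ffFourier_eq_inv_mul_fourierSum, mul_pow, ← pow_mul]
    _ ≤ 3 * Fintype.card F * (#E : ℝ) ^ ((3 : ℝ) / 2) / (Fintype.card F : ℝ) ^ 4 := by
        gcongr
        exact hT.trans (mul_add_sqrt_le_three_mul_rpow hq.le (Nat.cast_nonneg _) hE)
    _ = 3 * (#E : ℝ) ^ ((3 : ℝ) / 2) / (Fintype.card F : ℝ) ^ 3 := by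
        field_simp
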